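/- arXiv:1706.00034 — 5 statements merged into one kernel-verified Lean document; each statement's English description precedes it below -/
import Mathlib

section
/- Let G = (V, E) be a finite multigraph with edge weights w : E → ℝ_{≥0}, and for R ⊆ E let val(R) denote the minimum w-weight of a spanning tree of (V, E \ R), restricted to sets R such that (V, E \ R) is connected. Then val is supermodular on this domain: for any A₁, A₂ ⊆ E with (V, E \ (A₁ ∪ A₂)) connected, val(A₁) + val(A₂) ≤ val(A₁ ∩ A₂) + val(A₁ ∪ A₂). -/
/-!
Supermodularity reduces to decreasing marginals: for `A ⊆ B` and `x ∉ B`,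
`val (A + x) - val A ≤ val (B + x) - val B`; summing over the elements of `A₁ \ A₂`, added one
at a time to `A₁ ∩ A₂` and to `A₂`, gives the claim. For the marginal inequality take optimal
trees `T` avoiding `A` and `T'` avoiding `B + x`. If `x ∉ T`, then `T` avoids `A + x` and `T'`
avoids `B`. Otherwise the symmetric exchange property of spanning trees gives `f ∈ T' \ T`
such that `T - x + f` avoids `A + x` and `T' - f + x` avoids `B`, with the same total weight.
-/

open Finset

/-- The multigraph `(V, F)`: vertex set `V`, edges are the elements of the finite
edge set `F ⊆ E`, where `ends e` gives the pair of endpoints of `e`. -/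
def mgraph {V E : Type*} (ends : E → Sym2 V) (F : Finset E) : SimpleGraph V where
  Adj u v := u ≠ v ∧ ∃ e ∈ F, ends e = s(u, v)
  symm := by
    constructor
    rintro u v ⟨h, e, he, hv⟩
    exact ⟨h.symm, e, he, by rw [hv, Sym2.eq_swap]⟩
  loopless := ⟨fun u h => h.1 rfl⟩

/-- `val ends w R` is the minimum `w`-weight of a spanning tree of `(V, E \ R)`:
a spanning tree is a set `T` of edges disjoint from `R` such that `(V, T)` is connected
and `|T| = |V| − 1`. -/
noncomputable def val {V E : Type*} [Fintype V] [Fintype E] [DecidableEq E]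
    (ends : E → Sym2 V) (w : E → ℝ) (R : Finset E) : ℝ :=
  sInf {x : ℝ | ∃ T : Finset E, T ⊆ Finset.univ \ R ∧ (mgraph ends T).Connected ∧
    T.card = Fintype.card V - 1 ∧ x = ∑ e ∈ T, w e}

open SimpleGraph

namespace SimpleGraph

variable {V : Type*} {G H : SimpleGraph V} {u v : V}

lemma Connected.reachable_or_reachable_deleteEdges (hG : G.Connected) (u v z : V) :
    (G.deleteEdges {s(u, v)}).Reachable z u ∨ (G.deleteEdges {s(u, v)}).Reachable z v := by
  set S : Set V :=
    {x | (G.deleteEdges {s(u, v)}).Reachable x u ∨ (G.deleteEdges {s(u, v)}).Reachable x v}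
  by_contra hz
  obtain ⟨d, -, hd₁, hd₂⟩ :=
    (hG.preconnected z u).some.exists_boundary_dart Sᶜ hz (by simp [S])
  simp only [Set.mem_compl_iff, not_not] at hd₁ hd₂
  apply hd₁
  by_cases he : s(d.fst, d.snd) = s(u, v)
  · rcases Sym2.eq_iff.1 he with ⟨h, -⟩ | ⟨h, -⟩ <;> simp [S, h]
  · have hadj : (G.deleteEdges {s(u, v)}).Adj d.fst d.snd := by simp [d.adj, he]
    exact hd₂.imp hadj.reachable.trans hadj.reachable.trans

lemma Connected.connected_of_deleteEdges_le (hG : G.Connected)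
    (hle : G.deleteEdges {s(u, v)} ≤ H) (huv : H.Reachable u v) : H.Connected := by
  refine H.connected_iff_exists_forall_reachable.2 ⟨u, fun z => ?_⟩
  rcases hG.reachable_or_reachable_deleteEdges u v z with h | h
  · exact (h.mono hle).symm
  · exact huv.trans (h.mono hle).symm

lemma Walk.IsTrail.exists_boundary_edge {p : G.Walk u v} (hp : p.IsTrail) {S : Set V}
    (hu : u ∈ S) (hv : v ∉ S) :
    ∃ x ∈ S, ∃ y ∉ S, G.Adj x y ∧
      (G.deleteEdges {s(x, y)}).Reachable u x ∧ (G.deleteEdges {s(x, y)}).Reachable y v := by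
  induction p with
  | nil => exact absurd hu hv
  | @cons a b c hab q ih =>
    rw [Walk.isTrail_cons] at hp
    by_cases hb : b ∈ S
    · obtain ⟨x, hxS, y, hyS, hxy, hbx, hyc⟩ := ih hp.1 hb hv
      have hne : s(a, b) ≠ s(x, y) := by
        rintro h
        rcases Sym2.eq_iff.1 h with ⟨rfl, rfl⟩ | ⟨rfl, rfl⟩
        exacts [hyS hb, hyS hu]
      have hadj : (G.deleteEdges {s(x, y)}).Adj a b := by simp [hab, hne]
      exact ⟨x, hxS, y, hyS, hxy, hadj.reachable.trans hbx, hyc⟩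
    · refine ⟨a, hu, b, hb, hab, .rfl, (q.toDeleteEdges _ fun e he => ?_).reachable⟩
      rintro rfl
      exact hp.2 he

end SimpleGraph

section Multigraph

variable {V E : Type*} {ends : E → Sym2 V} {T T' : Finset E}

lemma mgraph_mono (h : T ⊆ T') : mgraph ends T ≤ mgraph ends T' := by
  rintro u v ⟨huv, e, he, hev⟩
  exact ⟨huv, e, h he, hev⟩

-- Only `≤`: a parallel copy of `f` keeps its endpoints adjacent.
lemma deleteEdges_le_mgraph_erase [DecidableEq E] (T : Finset E) (f : E) :
    (mgraph ends T).deleteEdges {ends f} ≤ mgraph ends (T.erase f) := by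
  intro u v huv
  simp only [deleteEdges_adj, Set.mem_singleton_iff] at huv
  obtain ⟨⟨huv, e, he, hev⟩, hne⟩ := huv
  refine ⟨huv, e, mem_erase.2 ⟨?_, he⟩, hev⟩
  rintro rfl
  exact hne hev.symm

variable [Fintype V]

lemma card_le_card_add_one_of_connected (hT : (mgraph ends T).Connected) :
    Fintype.card V ≤ T.card + 1 := by
  have hsub : (mgraph ends T).edgeSet ⊆ ends '' T := by
    intro s hs
    induction s with
    | h u v =>
      obtain ⟨-, e, he, hev⟩ := (mem_edgeSet _).1 hs
      exact ⟨e, he, hev⟩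
  calc Fintype.card V = Nat.card V := Nat.card_eq_fintype_card.symm
    _ ≤ (mgraph ends T).edgeSet.ncard + 1 := hT.card_vert_le_card_edgeSet_add_one
    _ ≤ (ends '' T).ncard + 1 := by gcongr; exact Set.toFinite _
    _ ≤ T.card + 1 := by grw [Set.ncard_image_le (Finset.finite_toSet T), Set.ncard_coe_finset]

def IsSpanningTree (ends : E → Sym2 V) (T : Finset E) : Prop :=
  (mgraph ends T).Connected ∧ T.card + 1 = Fintype.card V

lemma exists_isSpanningTree_subset {F : Finset E} (hF : (mgraph ends F).Connected) :
    ∃ T ⊆ F, IsSpanningTree ends T := by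
  classical
  -- Lift the edges of a spanning tree of the simple graph `mgraph ends F` to edges in `F`.
  obtain ⟨H, hHF, hH⟩ := hF.exists_isTree_le
  have hlift : ∀ s ∈ H.edgeFinset, ∃ e ∈ F, ends e = s := by
    intro s hs
    induction s with
    | h u v =>
      obtain ⟨-, e, he, hev⟩ := hHF (mem_edgeFinset.1 hs)
      exact ⟨e, he, hev⟩
  choose g hgF hg using hlift
  have hg_inj : Function.Injective fun s : H.edgeFinset => g s.1 s.2 := fun s t hst =>
    Subtype.ext (by rw [← hg s.1 s.2, ← hg t.1 t.2]; exact congrArg ends hst)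
  refine ⟨H.edgeFinset.attach.image fun s => g s.1 s.2, by simp [image_subset_iff, hgF], ?_, ?_⟩
  · refine hH.connected.mono fun u v huv => ⟨huv.ne, _, mem_image_of_mem _ (mem_attach _
      ⟨s(u, v), mem_edgeFinset.2 huv⟩), hg _ _⟩
  · rw [card_image_of_injective _ hg_inj, card_attach]
    exact hH.card_edgeFinset

namespace IsSpanningTree

variable [DecidableEq E] {e f : E}

lemma not_connected_erase (hT : IsSpanningTree ends T) (he : e ∈ T) :
    ¬ (mgraph ends (T.erase e)).Connected := fun h => by
  have := card_le_card_add_one_of_connected h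
  rw [← hT.2, ← card_erase_add_one he] at this
  omega

lemma insert_erase (hT : IsSpanningTree ends T) (hf : f ∈ T) (he : e ∉ T)
    (hc : (mgraph ends (insert e (T.erase f))).Connected) :
    IsSpanningTree ends (insert e (T.erase f)) :=
  ⟨hc, by rw [card_insert_of_notMem (mt mem_of_mem_erase he), card_erase_add_one hf, hT.2]⟩

lemma exchange {T₁ T₂ : Finset E} (h₁ : IsSpanningTree ends T₁) (h₂ : IsSpanningTree ends T₂)
    (he₂ : e ∈ T₂) (he₁ : e ∉ T₁) :
    ∃ f ∈ T₁, f ∉ T₂ ∧ IsSpanningTree ends (insert e (T₁.erase f)) ∧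
      IsSpanningTree ends (insert f (T₂.erase e)) := by
  induction hev : ends e with | h u v => ?_
  set G₂ := mgraph ends (T₂.erase e)
  have hle₂ : (mgraph ends T₂).deleteEdges {s(u, v)} ≤ G₂ :=
    hev ▸ deleteEdges_le_mgraph_erase T₂ e
  have hvu : ¬ G₂.Reachable u v := fun h =>
    h₂.not_connected_erase he₂ (h₂.1.connected_of_deleteEdges_le hle₂ h)
  have huv : u ≠ v := by rintro rfl; exact hvu .rfl
  -- `T₂ - e` splits into the side of `u` and the side of `v`; a `u`-`v` path in `T₁` crosses
  -- over by an edge `f` whose endpoints are still joined to `u` and `v` in `T₁ - f`.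
  obtain ⟨p, hp⟩ := (h₁.1.preconnected u v).exists_isPath
  obtain ⟨x, hxS, y, hyS, ⟨hxy, f, hf₁, hfe⟩, hux, hyv⟩ :=
    hp.isTrail.exists_boundary_edge (S := {z | G₂.Reachable u z}) .rfl hvu
  have hf₂ : f ∉ T₂ := fun hf => hyS <| hxS.trans <|
    Adj.reachable ⟨hxy, f, mem_erase.2 ⟨ne_of_mem_of_not_mem hf₁ he₁, hf⟩, hfe⟩
  have hle₁ : (mgraph ends T₁).deleteEdges {s(x, y)} ≤ mgraph ends (insert e (T₁.erase f)) :=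
    hfe ▸ (deleteEdges_le_mgraph_erase T₁ f).trans (mgraph_mono (subset_insert _ _))
  have hG₂ : G₂ ≤ mgraph ends (insert f (T₂.erase e)) := mgraph_mono (subset_insert _ _)
  have hyv₂ : G₂.Reachable y v :=
    ((h₂.1.reachable_or_reachable_deleteEdges u v y).resolve_left
      fun h => hyS (h.mono hle₂).symm).mono hle₂
  refine ⟨f, hf₁, hf₂, h₁.insert_erase hf₁ he₁ (h₁.1.connected_of_deleteEdges_le hle₁ ?_),
    h₂.insert_erase he₂ hf₂ (h₂.1.connected_of_deleteEdges_le (hle₂.trans hG₂) ?_)⟩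
  · have hadj : (mgraph ends (insert e (T₁.erase f))).Adj u v :=
      ⟨huv, e, mem_insert_self _ _, hev⟩
    exact (hux.mono hle₁).symm.trans (hadj.reachable.trans (hyv.mono hle₁).symm)
  · have hadj : (mgraph ends (insert f (T₂.erase e))).Adj x y :=
      ⟨hxy, f, mem_insert_self _ _, hfe⟩
    exact (hxS.mono hG₂).trans (hadj.reachable.trans (hyv₂.mono hG₂))

end IsSpanningTree

end Multigraph

lemma add_le_add_inter_union_of_insert {α β : Type*} [DecidableEq α] [AddCommMonoid β]
    [PartialOrder β] [IsOrderedCancelAddMonoid β] {f : Finset α → β} {D : Finset α → Prop}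
    (hD : ∀ ⦃A B⦄, A ⊆ B → D B → D A)
    (hinsert : ∀ ⦃A B x⦄, A ⊆ B → x ∉ B → D (insert x B) →
      f (insert x A) + f B ≤ f A + f (insert x B))
    {A₁ A₂ : Finset α} (h : D (A₁ ∪ A₂)) : f A₁ + f A₂ ≤ f (A₁ ∩ A₂) + f (A₁ ∪ A₂) := by
  suffices ∀ S ⊆ A₁ \ A₂, f (A₁ ∩ A₂ ∪ S) + f A₂ ≤ f (A₁ ∩ A₂) + f (A₂ ∪ S) by
    simpa [union_comm (A₁ ∩ A₂), sdiff_union_inter, union_comm A₂] using this _ subset_rfl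
  intro S hS
  induction S using Finset.induction_on with
  | empty => simp
  | insert x S hxS ih =>
    obtain ⟨hx, hS⟩ := insert_subset_iff.1 hS
    have hxA₂ : x ∉ A₂ ∪ S := by simp_all
    have hsub : insert x (A₂ ∪ S) ⊆ A₁ ∪ A₂ := by
      grind [insert_subset_iff, union_subset_iff]
    have hstep := hinsert (union_subset_union (inter_subset_right (s₁ := A₁)) subset_rfl) hxA₂
      (hD hsub h)
    rw [union_insert, union_insert]
    refine le_of_add_le_add_right (a := f (A₁ ∩ A₂ ∪ S) + f (A₂ ∪ S)) ?_
    convert add_le_add (ih hS) hstep using 1 <;> abel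

section Val

variable {V E : Type*} [Fintype V] [Fintype E] [DecidableEq E] {ends : E → Sym2 V} {w : E → ℝ}
  {A B R T : Finset E} {x : E}

lemma val_eq_sInf (R : Finset E) : val ends w R =
    sInf ((fun T => ∑ e ∈ T, w e) '' {T | Disjoint T R ∧ IsSpanningTree ends T}) := by
  unfold _root_.val
  congr 1
  ext x
  simp only [subset_sdiff, subset_univ, true_and, Set.mem_image, Set.mem_ofPred_eq, IsSpanningTree]
  constructor
  · rintro ⟨T, hR, hc, hcard, rfl⟩
    -- `V` is nonempty, so `Fintype.card V - 1` does not truncate.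
    have := hc.nonempty
    exact ⟨T, ⟨hR, hc, by have := Fintype.card_pos (α := V); omega⟩, rfl⟩
  · rintro ⟨T, ⟨hR, hc, hcard⟩, rfl⟩
    exact ⟨T, hR, hc, by omega, rfl⟩

lemma val_le_sum (hR : Disjoint T R) (hT : IsSpanningTree ends T) :
    val ends w R ≤ ∑ e ∈ T, w e := by
  rw [val_eq_sInf]
  exact csInf_le (Set.toFinite _).bddBelow ⟨T, ⟨hR, hT⟩, rfl⟩

lemma exists_val_eq_sum (h : ∃ T, Disjoint T R ∧ IsSpanningTree ends T) :
    ∃ T, Disjoint T R ∧ IsSpanningTree ends T ∧ val ends w R = ∑ e ∈ T, w e := by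
  have hne : ((fun T => ∑ e ∈ T, w e) '' {T | Disjoint T R ∧ IsSpanningTree ends T}).Nonempty :=
    Set.Nonempty.image _ h
  obtain ⟨T, ⟨hR, hT⟩, hval⟩ := hne.csInf_mem (Set.toFinite _)
  exact ⟨T, hR, hT, by rw [val_eq_sInf, ← hval]⟩

lemma val_insert_add_val_le (hAB : A ⊆ B) (hxB : x ∉ B)
    (h : ∃ T, Disjoint T (insert x B) ∧ IsSpanningTree ends T) :
    val ends w (insert x A) + val ends w B ≤ val ends w A + val ends w (insert x B) := by
  obtain ⟨T', hT'R, hT', hval'⟩ := exists_val_eq_sum (w := w) h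
  have hT'B : Disjoint T' B := hT'R.mono_right (subset_insert x B)
  obtain ⟨T, hTA, hT, hval⟩ := exists_val_eq_sum (w := w) ⟨T', hT'B.mono_right hAB, hT'⟩
  have hxT' : x ∉ T' := disjoint_right.1 hT'R (mem_insert_self x B)
  rw [hval, hval']
  by_cases hxT : x ∈ T
  · obtain ⟨f, hfT', hfT, hT'swap, hTswap⟩ := hT'.exchange hT hxT hxT'
    have hfB : f ∉ insert x B := disjoint_left.1 hT'R hfT'
    have h₁ := val_le_sum (w := w) (R := insert x A) (disjoint_insert_left.2
      ⟨mt (insert_subset_insert x hAB ·) hfB,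
        disjoint_insert_right.2 ⟨notMem_erase x T, hTA.mono_left (erase_subset x T)⟩⟩) hTswap
    have h₂ := val_le_sum (w := w) (R := B)
      (disjoint_insert_left.2 ⟨hxB, hT'B.mono_left (erase_subset f T')⟩) hT'swap
    rw [sum_insert (mt mem_of_mem_erase hfT), sum_erase_eq_sub hxT] at h₁
    rw [sum_insert (mt mem_of_mem_erase hxT'), sum_erase_eq_sub hfT'] at h₂
    linarith
  · have h₁ := val_le_sum (w := w) (disjoint_insert_right.2 ⟨hxT, hTA⟩) hT
    have h₂ := val_le_sum (w := w) hT'B hT'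
    linarith

end Val

theorem stmt1_general {V E : Type*} [Fintype V] [Fintype E] [DecidableEq E]
    (ends : E → Sym2 V) (w : E → ℝ)
    (A₁ A₂ : Finset E)
    (hconn : (mgraph ends (Finset.univ \ (A₁ ∪ A₂))).Connected) :
    val ends w A₁ + val ends w A₂ ≤ val ends w (A₁ ∩ A₂) + val ends w (A₁ ∪ A₂) := by
  obtain ⟨T, hT, hspan⟩ := exists_isSpanningTree_subset hconn
  exact add_le_add_inter_union_of_insert (D := fun R => ∃ T, Disjoint T R ∧ IsSpanningTree ends T)
    (fun _ _ hAB ⟨T, hTB, hT⟩ => ⟨T, hTB.mono_right hAB, hT⟩)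
    (fun _ _ _ hAB hxB h => val_insert_add_val_le hAB hxB h) ⟨T, (subset_sdiff.1 hT).2, hspan⟩

/-- `val` is supermodular on the domain of interdiction sets whose removal keeps the
graph connected. -/
theorem stmt1 {V E : Type*} [Fintype V] [Fintype E] [DecidableEq E]
    (ends : E → Sym2 V) (w : E → ℝ) (hw : ∀ e, 0 ≤ w e)
    (A₁ A₂ : Finset E)
    (hconn : (mgraph ends (Finset.univ \ (A₁ ∪ A₂))).Connected) :
    val ends w A₁ + val ends w A₂ ≤ val ends w (A₁ ∩ A₂) + val ends w (A₁ ∪ A₂) :=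
  stmt1_general ends w A₁ A₂ hconn
end

section
/- Consider the tree-knapsack LP: given a finite rooted tree Γ with non-root node set N, values α_v ≥ 0, weights β_v ≥ 0, and budget B ≥ 0, maximize Σ_v α_v x_v subject to x_v ≤ x_u for every node v and every child u of v, Σ_v β_v x_v ≤ B, and 0 ≤ x_v ≤ 1. If x̄ is an extreme point (vertex) of this polytope, then at most one child v of the root r has the property that the subtree rooted at v contains a node w with 0 < x̄_w < 1. -/
/-!
Suppose two distinct children `v₁`, `v₂` of the root carry fractional nodes `w₁`, `w₂` in their
subtrees. Let `Sᵢ` be the set of nodes of the subtree of `vᵢ` with value `x̄ wᵢ`. Since the root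
carries no variable, every order constraint leaving `Sᵢ` stays inside that subtree and so joins
nodes of different values: it is slack; the box constraints are slack on `Sᵢ` as well. Hence moving `x̄` along
`c₁ 𝟙_{S₁} + c₂ 𝟙_{S₂}`, with `(c₁, c₂) ≠ 0` chosen so that the budget row is unchanged, stays
in the polytope for small steps in both directions, and `x̄` is not extreme.
-/

open Finset Filter Topology

theorem eq_zero_of_mem_extremePoints_of_eventually_add_smul_mem {V : Type*} [AddCommGroup V]
    [Module ℝ V] {P : Set V} {x d : V} (hx : x ∈ P.extremePoints ℝ)
    (h : ∀ᶠ t : ℝ in 𝓝 0, x + t • d ∈ P) : d = 0 := by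
  have hneg : ∀ᶠ t : ℝ in 𝓝 0, x + (-t) • d ∈ P :=
    (continuous_neg.tendsto' (0 : ℝ) 0 neg_zero).eventually h
  obtain ⟨t, ⟨hplus, hminus⟩, ht⟩ :=
    (((h.and hneg).filter_mono nhdsWithin_le_nhds).and
      (self_mem_nhdsWithin : Set.Ioi (0 : ℝ) ∈ 𝓝[>] 0)).exists
  have hmid : x ∈ openSegment ℝ (x + t • d) (x + (-t) • d) :=
    ⟨1 / 2, 1 / 2, by norm_num, by norm_num, by norm_num, by module⟩
  have htd : t • d = 0 := add_eq_left.1 (hx.2 hplus hminus hmid)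
  exact (smul_eq_zero.1 htd).resolve_left (ne_of_gt ht)

theorem eventually_pos_add_mul {a : ℝ} (ha : 0 < a) (c : ℝ) :
    ∀ᶠ t : ℝ in 𝓝 0, 0 < a + t * c :=
  ((continuous_const.add (continuous_id.mul continuous_const)).tendsto' 0 a (by simp)).eventually
    (lt_mem_nhds ha)

section OrderKnapsack

variable {κ : Type*} [Fintype κ]

def orderKnapsack (E : κ → κ → Prop) (β : κ → ℝ) (B : ℝ) : Set (κ → ℝ) :=
  {x | (∀ v, 0 ≤ x v ∧ x v ≤ 1) ∧ (∀ v u, E v u → x v ≤ x u) ∧ ∑ v, β v * x v ≤ B}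

/-- `S` is a union of connected components of the graph of the tight order constraints at `x`. -/
def IsTightClosed (E : κ → κ → Prop) (x : κ → ℝ) (S : Set κ) : Prop :=
  ∀ a b, E a b → x a = x b → (a ∈ S ↔ b ∈ S)

variable {E : κ → κ → Prop} {β : κ → ℝ} {B : ℝ} {x d : κ → ℝ}

theorem eventually_add_smul_mem_orderKnapsack (hx : x ∈ orderKnapsack E β B)
    (hfrac : ∀ v, d v ≠ 0 → x v ∈ Set.Ioo 0 1) (htight : ∀ a b, E a b → x a = x b → d a = d b)
    (hbudget : ∑ v, β v * d v = 0) :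
    ∀ᶠ t : ℝ in 𝓝 0, x + t • d ∈ orderKnapsack E β B := by
  obtain ⟨hbox, hord, hsum⟩ := hx
  have hbox' : ∀ v, ∀ᶠ t : ℝ in 𝓝 0, 0 ≤ x v + t * d v ∧ x v + t * d v ≤ 1 := by
    intro v
    by_cases hd : d v = 0
    · exact .of_forall fun t => by simpa [hd] using hbox v
    · obtain ⟨h0, h1⟩ := hfrac v hd
      filter_upwards [eventually_pos_add_mul h0 (d v), eventually_pos_add_mul (sub_pos.2 h1) (-d v)]
        with t ht₀ ht₁
      constructor <;> linarith
  have hord' : ∀ a b, ∀ᶠ t : ℝ in 𝓝 0, E a b → x a + t * d a ≤ x b + t * d b := by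
    intro a b
    by_cases hab : E a b
    · rcases (hord a b hab).lt_or_eq with hlt | heq
      · filter_upwards [eventually_pos_add_mul (sub_pos.2 hlt) (d b - d a)] with t ht _
        linarith
      · exact .of_forall fun t _ => by rw [heq, htight a b hab heq]
    · exact .of_forall fun t h => absurd h hab
  filter_upwards [eventually_all.2 hbox', eventually_all.2 fun a => eventually_all.2 (hord' a)]
    with t htbox htord
  refine ⟨htbox, htord, ?_⟩
  calc ∑ v, β v * (x + t • d) v = ∑ v, β v * x v + t * ∑ v, β v * d v := by
        simp only [Pi.add_apply, Pi.smul_apply, smul_eq_mul, mul_add, sum_add_distrib, mul_sum,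
          mul_left_comm]
    _ ≤ B := by rw [hbudget, mul_zero, add_zero]; exact hsum

theorem exists_ne_zero_mul_add_mul_eq_zero (b₁ b₂ : ℝ) :
    ∃ c₁ c₂ : ℝ, (c₁ ≠ 0 ∨ c₂ ≠ 0) ∧ c₁ * b₁ + c₂ * b₂ = 0 := by
  by_cases h : b₁ = 0
  · exact ⟨1, 0, Or.inl one_ne_zero, by simp [h]⟩
  · exact ⟨b₂, -b₁, Or.inr (neg_ne_zero.2 h), by ring⟩

theorem not_disjoint_of_mem_extremePoints_orderKnapsack
    (hx : x ∈ (orderKnapsack E β B).extremePoints ℝ) {S₁ S₂ : Set κ}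
    (hS₁ : IsTightClosed E x S₁) (hS₂ : IsTightClosed E x S₂)
    (hfrac₁ : ∀ v ∈ S₁, x v ∈ Set.Ioo 0 1) (hfrac₂ : ∀ v ∈ S₂, x v ∈ Set.Ioo 0 1)
    (hne₁ : S₁.Nonempty) (hne₂ : S₂.Nonempty) : ¬Disjoint S₁ S₂ := by
  classical
  intro hdisj
  obtain ⟨c₁, c₂, hc, hbudget⟩ :=
    exists_ne_zero_mul_add_mul_eq_zero (∑ v, S₁.indicator β v) (∑ v, S₂.indicator β v)
  set d : κ → ℝ := S₁.indicator (fun _ => c₁) + S₂.indicator (fun _ => c₂) with hd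
  have hzero : d = 0 := by
    refine eq_zero_of_mem_extremePoints_of_eventually_add_smul_mem hx
      (eventually_add_smul_mem_orderKnapsack hx.1 (fun v hv => ?_) (fun a b hab heq => ?_) ?_)
    · by_cases h₁ : v ∈ S₁
      · exact hfrac₁ v h₁
      · by_cases h₂ : v ∈ S₂
        · exact hfrac₂ v h₂
        · simp [hd, h₁, h₂] at hv
    · simp only [hd, Pi.add_apply, Set.indicator_const_eq_indicator_const (hS₁ a b hab heq),
        Set.indicator_const_eq_indicator_const (hS₂ a b hab heq)]
    · rw [← hbudget, mul_sum, mul_sum, ← sum_add_distrib]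
      refine sum_congr rfl fun v _ => ?_
      simp only [hd, Pi.add_apply, Set.indicator_apply]
      split_ifs <;> ring
  obtain ⟨w₁, hw₁⟩ := hne₁
  obtain ⟨w₂, hw₂⟩ := hne₂
  have h₁ := congrFun hzero w₁
  have h₂ := congrFun hzero w₂
  simp only [hd, Pi.add_apply, Set.indicator_of_mem hw₁, Set.indicator_of_mem hw₂,
    Set.indicator_of_notMem (hdisj.notMem_of_mem_left hw₁),
    Set.indicator_of_notMem (hdisj.notMem_of_mem_right hw₂), Pi.zero_apply, add_zero,
    zero_add] at h₁ h₂
  exact hc.elim (· h₁) (· h₂)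

end OrderKnapsack

section RootedTree

variable {ι : Type*} {parent : ι → ι} {r v : ι}

def subtree (parent : ι → ι) (v : ι) : Set ι :=
  {u | ∃ n, parent^[n] u = v}

theorem parent_mem_subtree_iff {c : ι} (hv : parent v = r) (hc : parent c ≠ r) :
    parent c ∈ subtree parent v ↔ c ∈ subtree parent v := by
  constructor
  · rintro ⟨n, hn⟩
    exact ⟨n + 1, by rwa [Function.iterate_succ_apply]⟩
  · rintro ⟨_ | n, hn⟩
    · exact absurd ((congrArg parent hn).trans hv) hc
    · exact ⟨n, by rwa [Function.iterate_succ_apply] at hn⟩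

theorem eq_of_mem_subtree_of_parent_eq_root {w : ι} (hroot : parent r = r)
    (hv : parent v = r) (hw : w ≠ r) (h : v ∈ subtree parent w) : v = w := by
  obtain ⟨_ | n, hn⟩ := h
  · exact hn
  · rw [Function.iterate_succ_apply, hv, Function.iterate_fixed hroot] at hn
    exact absurd hn.symm hw

theorem disjoint_subtree_of_parent_eq_root {v₁ v₂ : ι} (hroot : parent r = r)
    (hv₁ : v₁ ≠ r) (hv₂ : v₂ ≠ r) (hp₁ : parent v₁ = r) (hp₂ : parent v₂ = r) (hne : v₁ ≠ v₂) :
    Disjoint (subtree parent v₁) (subtree parent v₂) := by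
  rw [Set.disjoint_left]
  rintro u ⟨n, hn⟩ ⟨m, hm⟩
  rcases le_total n m with h | h
  · obtain ⟨k, rfl⟩ := Nat.exists_eq_add_of_le h
    rw [add_comm, Function.iterate_add_apply, hn] at hm
    exact hne (eq_of_mem_subtree_of_parent_eq_root hroot hp₁ hv₂ ⟨k, hm⟩)
  · obtain ⟨k, rfl⟩ := Nat.exists_eq_add_of_le h
    rw [add_comm, Function.iterate_add_apply, hm] at hn
    exact hne (eq_of_mem_subtree_of_parent_eq_root hroot hp₂ hv₁ ⟨k, hn⟩).symm

theorem isTightClosed_subtree_inter_level (hv : parent v = r) (x : {u : ι // u ≠ r} → ℝ)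
    (c : ℝ) :
    IsTightClosed (fun a b : {u : ι // u ≠ r} => parent b.1 = a.1) x
      (Subtype.val ⁻¹' subtree parent v ∩ {u | x u = c}) := by
  intro a b hab heq
  simp only [Set.mem_inter_iff, Set.mem_preimage, Set.mem_ofPred_eq, heq]
  rw [← hab, parent_mem_subtree_iff hv (hab ▸ a.2)]

end RootedTree

theorem stmt3_general {ι : Type*} [Fintype ι] [DecidableEq ι]
    (r : ι) (parent : ι → ι) (hroot : parent r = r)
    (β : {v : ι // v ≠ r} → ℝ)
    (B : ℝ)
    (P : Set ({v : ι // v ≠ r} → ℝ))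
    (hP : P = {x | (∀ v, 0 ≤ x v ∧ x v ≤ 1) ∧
      (∀ v u : {v : ι // v ≠ r}, parent u.1 = v.1 → x v ≤ x u) ∧
      ∑ v : {v : ι // v ≠ r}, β v * x v ≤ B})
    (xbar : {v : ι // v ≠ r} → ℝ) (hxbar : xbar ∈ Set.extremePoints ℝ P) :
    ∀ v₁ v₂ : ι, v₁ ≠ r → v₂ ≠ r → parent v₁ = r → parent v₂ = r →
      (∃ w₁ : {v : ι // v ≠ r}, (∃ n : ℕ, parent^[n] w₁.1 = v₁) ∧
        0 < xbar w₁ ∧ xbar w₁ < 1) →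
      (∃ w₂ : {v : ι // v ≠ r}, (∃ n : ℕ, parent^[n] w₂.1 = v₂) ∧
        0 < xbar w₂ ∧ xbar w₂ < 1) →
      v₁ = v₂ := by
  rintro v₁ v₂ hv₁ hv₂ hp₁ hp₂ ⟨w₁, hw₁, hw₁0, hw₁1⟩ ⟨w₂, hw₂, hw₂0, hw₂1⟩
  by_contra hne
  subst hP
  have hdisj := (disjoint_subtree_of_parent_eq_root hroot hv₁ hv₂ hp₁ hp₂ hne).preimage
    (Subtype.val : {v : ι // v ≠ r} → ι)
  refine not_disjoint_of_mem_extremePoints_orderKnapsack (E := fun a b => parent b.1 = a.1)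
    hxbar (isTightClosed_subtree_inter_level hp₁ xbar (xbar w₁))
    (isTightClosed_subtree_inter_level hp₂ xbar (xbar w₂))
    (fun u hu => hu.2 ▸ ⟨hw₁0, hw₁1⟩) (fun u hu => hu.2 ▸ ⟨hw₂0, hw₂1⟩)
    ⟨w₁, ?_⟩ ⟨w₂, ?_⟩ (hdisj.mono Set.inter_subset_left Set.inter_subset_left)
  exacts [⟨hw₁, rfl⟩, ⟨hw₂, rfl⟩]

/-- Extreme points of the tree-knapsack polytope: at most one child of the root has a
fractional node in its subtree. The rooted tree is given by a `parent` map on a finite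
node type `ι` with root `r` (with `parent r = r`, and every node reaching `r` by
iterating `parent`); the LP variables are indexed by the non-root nodes. -/
theorem stmt3 {ι : Type*} [Fintype ι] [DecidableEq ι]
    (r : ι) (parent : ι → ι) (hroot : parent r = r)
    (htree : ∀ v : ι, ∃ n : ℕ, parent^[n] v = r)
    (α β : {v : ι // v ≠ r} → ℝ) (hα : ∀ v, 0 ≤ α v) (hβ : ∀ v, 0 ≤ β v)
    (B : ℝ) (hB : 0 ≤ B)
    (P : Set ({v : ι // v ≠ r} → ℝ))
    (hP : P = {x | (∀ v, 0 ≤ x v ∧ x v ≤ 1) ∧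
      (∀ v u : {v : ι // v ≠ r}, parent u.1 = v.1 → x v ≤ x u) ∧
      ∑ v : {v : ι // v ≠ r}, β v * x v ≤ B})
    (xbar : {v : ι // v ≠ r} → ℝ) (hxbar : xbar ∈ Set.extremePoints ℝ P) :
    ∀ v₁ v₂ : ι, v₁ ≠ r → v₂ ≠ r → parent v₁ = r → parent v₂ = r →
      (∃ w₁ : {v : ι // v ≠ r}, (∃ n : ℕ, parent^[n] w₁.1 = v₁) ∧
        0 < xbar w₁ ∧ xbar w₁ < 1) →
      (∃ w₂ : {v : ι // v ≠ r}, (∃ n : ℕ, parent^[n] w₂.1 = v₂) ∧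
        0 < xbar w₂ ∧ xbar w₂ < 1) →
      v₁ = v₂ :=
  stmt3_general r parent hroot β B P hP xbar hxbar
end

section
/- In the tree-knapsack problem (rooted tree Γ with non-root nodes N, values α_v ≥ 0, weights β_v ≥ 0, budget B ≥ 0), there exists an integral feasible solution (a downwards-closed set S ⊆ N with Σ_{v∈S} β_v ≤ B) whose value Σ_{v∈S} α_v is at least OPT_LP − max_{chains C ⊆ N} Σ_{v∈C} α_v, where OPT_LP is the optimum of the LP relaxation (maximize Σ α_v x_v subject to x_v ≤ x_u for each child u of v, Σ β_v x_v ≤ B, 0 ≤ x ≤ 1). -/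
open Finset

/-!
By the layer-cake formula an LP-feasible `x` is a convex combination of its superlevel sets, which
are nested and downwards closed. A convex combination obeying one budget constraint is dominated
by one supported on two of its sets, `μ • 𝟙_T + (1 - μ) • 𝟙_T'` with `T ⊆ T'`, so it remains to
round the uniform fractional solution `(1 - μ) • 𝟙_(T' \ T)`. This goes by induction on the node
set: split off the subtree `R` of a topmost node `m`. If nothing else is left, drop `m`; its value
is recovered because `m` extends every chain. Otherwise the two-item fractional knapsack on `R` and
its complement takes one part whole or not at all and the other recursively, so that the loss of
all steps together is the value of a single chain.
-/

namespace TreeKnapsack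

variable {ι : Type*} {r : ι}

abbrev NonRoot (r : ι) : Type _ := {v : ι // v ≠ r}

section Tree

variable (parent : ι → ι)

def IsDescendant (u v : NonRoot r) : Prop := ∃ n, parent^[n] u.1 = v.1

def ChildClosedIn (F G : Finset (NonRoot r)) : Prop :=
  ∀ v ∈ G, ∀ u ∈ F, parent u.1 = v.1 → u ∈ G

variable {parent}

theorem ChildClosedIn.mono {F F' G : Finset (NonRoot r)} (h : ChildClosedIn parent F G)
    (hF : F' ⊆ F) : ChildClosedIn parent F' G :=
  fun v hv u hu => h v hv u (hF hu)

theorem ChildClosedIn.union [DecidableEq ι] {F A G : Finset (NonRoot r)}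
    (hA : ChildClosedIn parent F A) (hG : ChildClosedIn parent (F \ A) G) :
    ChildClosedIn parent F (A ∪ G) := by
  intro v hv u hu hpar
  rcases mem_union.mp hv with hv | hv
  · exact mem_union_left _ (hA v hv u hu hpar)
  · by_cases huA : u ∈ A
    · exact mem_union_left _ huA
    · exact mem_union_right _ (hG v hv u (mem_sdiff.mpr ⟨hu, huA⟩) hpar)

theorem ChildClosedIn.trans {F A G : Finset (NonRoot r)} (hG : ChildClosedIn parent A G)
    (hGA : G ⊆ A) (hA : ChildClosedIn parent F A) : ChildClosedIn parent F G :=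
  fun v hv u hu hpar => hG v hv u (hA v (hGA hv) u hu hpar) hpar

theorem childClosedIn_filter_isDescendant (F : Finset (NonRoot r))
    (m : NonRoot r) [DecidablePred (IsDescendant parent · m)] :
    ChildClosedIn parent F (F.filter (IsDescendant parent · m)) := by
  intro v hv u hu hpar
  obtain ⟨n, hn⟩ := (mem_filter.mp hv).2
  exact mem_filter.mpr ⟨hu, n + 1, by rw [Function.iterate_succ_apply, hpar, hn]⟩

theorem childClosedIn_filter_not_isDescendant {F : Finset (NonRoot r)}
    {m : NonRoot r} [DecidablePred (IsDescendant parent · m)]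
    (htop : ∀ v ∈ F, parent m.1 ≠ v.1) :
    ChildClosedIn parent F (F.filter (¬IsDescendant parent · m)) := by
  intro v hv u hu hpar
  refine mem_filter.mpr ⟨hu, ?_⟩
  rintro ⟨_ | n, hn⟩
  · exact htop v (mem_filter.mp hv).1 (by rw [← hpar, ← hn, Function.iterate_zero_apply])
  · exact (mem_filter.mp hv).2 ⟨n, by rwa [Function.iterate_succ_apply, hpar] at hn⟩

theorem exists_parent_not_mem (htree : ∀ v : ι, ∃ n, parent^[n] v = r)
    {F : Finset (NonRoot r)} (hF : F.Nonempty) : ∃ m ∈ F, ∀ v ∈ F, parent m.1 ≠ v.1 := by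
  classical
  obtain ⟨m, hm, hmin⟩ := F.exists_min_image (fun v => Nat.find (htree v.1)) hF
  refine ⟨m, hm, fun v hv hpar => ?_⟩
  have hpos : 0 < Nat.find (htree m.1) := Nat.find_pos _ |>.mpr m.2
  have hle : Nat.find (htree v.1) ≤ Nat.find (htree m.1) - 1 := Nat.find_min' _ <| by
    rw [← hpar, ← Function.iterate_succ_apply, Nat.succ_eq_add_one, Nat.sub_add_cancel hpos]
    exact Nat.find_spec (htree m.1)
  have := hmin v hv
  omega

end Tree

theorem exists_two_item_rounding {a₁ a₂ b₁ b₂ θ b : ℝ} (ha₁ : 0 ≤ a₁) (ha₂ : 0 ≤ a₂) (hb₂ : 0 ≤ b₂)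
    (hθ0 : 0 ≤ θ) (hθ1 : θ ≤ 1) (hb : θ * (b₁ + b₂) ≤ b) (hdens : a₂ * b₁ ≤ a₁ * b₂) :
    (∃ θ₂, 0 ≤ θ₂ ∧ θ₂ ≤ 1 ∧ θ₂ * b₂ ≤ b - b₁ ∧ θ * (a₁ + a₂) ≤ a₁ + θ₂ * a₂) ∨
      (∃ θ₁, 0 ≤ θ₁ ∧ θ₁ ≤ 1 ∧ θ₁ * b₁ ≤ b ∧ θ * (a₁ + a₂) ≤ θ₁ * a₁) := by
  by_cases hfit : b₁ ≤ b
  · left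
    by_cases hall : b₂ ≤ b - b₁
    · exact ⟨1, zero_le_one, le_rfl, by linarith, by nlinarith⟩
    have hb₂pos : 0 < b₂ := by linarith
    have hθ₂ : (b - b₁) / b₂ * b₂ = b - b₁ := div_mul_cancel₀ _ hb₂pos.ne'
    refine ⟨(b - b₁) / b₂, div_nonneg (by linarith) hb₂, (div_le_one hb₂pos).mpr (by linarith),
      hθ₂.le, le_of_mul_le_mul_right ?_ hb₂pos⟩
    nlinarith [mul_le_mul_of_nonneg_left hdens (sub_nonneg.mpr hθ1)]
  · right
    have hb₁pos : 0 < b₁ := by nlinarith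
    have hθ₁ : b / b₁ * b₁ = b := div_mul_cancel₀ _ hb₁pos.ne'
    refine ⟨b / b₁, div_nonneg (by nlinarith) hb₁pos.le, (div_le_one hb₁pos).mpr (by linarith),
      hθ₁.le, le_of_mul_le_mul_right ?_ hb₁pos⟩
    nlinarith [mul_le_mul_of_nonneg_left hdens hθ0]

section Rounding

variable (parent : ι → ι) (α β : NonRoot r → ℝ)

/-- The uniform fractional solution `θ • 𝟙_F` of budget `b` rounds to a child-closed subset of
`F`, losing at most the value `c` of a chain in `F`. -/
def IsRoundable (F : Finset (NonRoot r)) : Prop :=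
  ∀ θ b c : ℝ, 0 ≤ θ → θ ≤ 1 → θ * ∑ v ∈ F, β v ≤ b →
    (∀ C ⊆ F, IsChain (IsDescendant parent) (C : Set (NonRoot r)) → ∑ v ∈ C, α v ≤ c) →
    ∃ G ⊆ F, ChildClosedIn parent F G ∧ ∑ v ∈ G, β v ≤ b ∧ θ * ∑ v ∈ F, α v - c ≤ ∑ v ∈ G, α v

theorem isRoundable_empty : IsRoundable parent α β ∅ := by
  intro θ b c _ _ hb hc
  refine ⟨∅, subset_rfl, fun v hv => absurd hv (notMem_empty v), by simpa using hb, ?_⟩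
  simpa using hc ∅ subset_rfl (by simp)

variable {parent α β}

theorem IsRoundable.of_erase [DecidableEq ι] (hα : ∀ v, 0 ≤ α v) (hβ : ∀ v, 0 ≤ β v)
    {F : Finset (NonRoot r)} {m : NonRoot r} (hm : m ∈ F)
    (hbelow : ∀ u ∈ F, IsDescendant parent u m) (htop : ∀ v ∈ F, parent m.1 ≠ v.1)
    (h : IsRoundable parent α β (F.erase m)) : IsRoundable parent α β F := by
  intro θ b c hθ0 hθ1 hb hc
  have hβF := sum_erase_add F β hm
  have hαF := sum_erase_add F α hm
  -- a chain avoiding `m` stays a chain when `m` is added, since everything in `F` lies below `m`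
  have hc' : ∀ C ⊆ F.erase m, IsChain (IsDescendant parent) (C : Set (NonRoot r)) →
      ∑ v ∈ C, α v ≤ c - α m := by
    intro C hC hchain
    have hmC : m ∉ C := fun h => (mem_erase.mp (hC h)).1 rfl
    have := hc (insert m C) (insert_subset hm (hC.trans (erase_subset m F))) <| by
      rw [coe_insert]
      exact hchain.insert fun u hu _ => Or.inr (hbelow u (erase_subset m F (hC hu)))
    rw [sum_insert hmC] at this
    linarith
  obtain ⟨G, hGF, hG, hGb, hGα⟩ :=
    h θ b (c - α m) hθ0 hθ1 (by nlinarith [mul_nonneg hθ0 (hβ m)]) hc'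
  refine ⟨G, hGF.trans (erase_subset m F), fun v hv u hu hpar => hG v hv u ?_ hpar, hGb,
    by nlinarith [mul_nonneg (sub_nonneg.mpr hθ1) (hα m)]⟩
  exact mem_erase.mpr ⟨fun hum => htop v (erase_subset m F (hGF hv)) (hum ▸ hpar), hu⟩

theorem IsRoundable.union [DecidableEq ι] (hα : ∀ v, 0 ≤ α v) (hβ : ∀ v, 0 ≤ β v)
    {A A' : Finset (NonRoot r)} (hdisj : Disjoint A A') (hA : ChildClosedIn parent (A ∪ A') A)
    (hdens : (∑ v ∈ A', α v) * ∑ v ∈ A, β v ≤ (∑ v ∈ A, α v) * ∑ v ∈ A', β v)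
    (h : IsRoundable parent α β A) (h' : IsRoundable parent α β A') :
    IsRoundable parent α β (A ∪ A') := by
  intro θ b c hθ0 hθ1 hb hc
  rw [sum_union hdisj] at hb ⊢
  rcases exists_two_item_rounding (sum_nonneg fun v _ => hα v) (sum_nonneg fun v _ => hα v)
      (sum_nonneg fun v _ => hβ v) hθ0 hθ1 hb hdens with
    ⟨θ₂, h0, h1, hb₂, hval⟩ | ⟨θ₁, h0, h1, hb₁, hval⟩
  · obtain ⟨G, hGA', hG, hGb, hGα⟩ :=
      h' θ₂ _ c h0 h1 hb₂ fun C hC => hc C (hC.trans subset_union_right)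
    have hdisjG : Disjoint A G := hdisj.mono_right hGA'
    refine ⟨A ∪ G, union_subset_union subset_rfl hGA', hA.union ?_, ?_, ?_⟩
    · rwa [union_sdiff_cancel_left hdisj]
    · rw [sum_union hdisjG]; linarith
    · rw [sum_union hdisjG]; linarith
  · obtain ⟨G, hGA, hG, hGb, hGα⟩ :=
      h θ₁ b c h0 h1 hb₁ fun C hC => hc C (hC.trans subset_union_left)
    exact ⟨G, hGA.trans subset_union_left, hG.trans hGA hA, hGb, by linarith⟩

theorem isRoundable (htree : ∀ v : ι, ∃ n, parent^[n] v = r)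
    (hα : ∀ v, 0 ≤ α v) (hβ : ∀ v, 0 ≤ β v) (F : Finset (NonRoot r)) :
    IsRoundable parent α β F := by
  classical
  induction F using Finset.strongInduction with
  | _ F ih =>
  rcases F.eq_empty_or_nonempty with rfl | hF
  · exact isRoundable_empty parent α β
  obtain ⟨m, hm, htop⟩ := exists_parent_not_mem htree hF
  set R := F.filter (IsDescendant parent · m)
  set R' := F.filter (¬IsDescendant parent · m)
  have hmR : m ∈ R := mem_filter.mpr ⟨hm, 0, rfl⟩
  rcases R'.eq_empty_or_nonempty with hR' | ⟨w, hw⟩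
  · refine IsRoundable.of_erase hα hβ hm (fun u hu => ?_) htop (ih _ (erase_ssubset hm))
    by_contra hu'
    exact notMem_empty u (hR' ▸ mem_filter.mpr ⟨hu, hu'⟩)
  have hRF : R ⊂ F := filter_ssubset.mpr ⟨w, (mem_filter.mp hw).1, (mem_filter.mp hw).2⟩
  have hR'F : R' ⊂ F := filter_ssubset.mpr ⟨m, hm, not_not.mpr (mem_filter.mp hmR).2⟩
  have hF : F = R ∪ R' := (filter_union_filter_not_eq _ F).symm
  have hdisj : Disjoint R R' := disjoint_filter_filter_not F F _
  rcases le_total ((∑ v ∈ R', α v) * ∑ v ∈ R, β v) ((∑ v ∈ R, α v) * ∑ v ∈ R', β v) with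
    hdens | hdens
  · rw [hF]
    exact IsRoundable.union hα hβ hdisj (hF ▸ childClosedIn_filter_isDescendant F m) hdens
      (ih R hRF) (ih R' hR'F)
  · rw [hF, union_comm]
    exact IsRoundable.union hα hβ hdisj.symm
      (union_comm R R' ▸ hF ▸ childClosedIn_filter_not_isDescendant htop) hdens
      (ih R' hR'F) (ih R hRF)

end Rounding

section Levels

noncomputable def nextAbove (M : ℝ) (V : Finset ℝ) (t : ℝ) : ℝ :=
  (insert M (V.filter (t < ·))).min' (insert_nonempty _ _)

theorem sum_nextAbove_sub (M : ℝ) (V : Finset ℝ) (hV : ∀ t ∈ V, t ≤ M) :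
    ∑ t ∈ V, (nextAbove M V t - t) = M - (insert M V).min' (insert_nonempty _ _) ∧
      ∀ y ∈ V, ∑ t ∈ V.filter (· < y), (nextAbove M V t - t) =
        y - (insert M V).min' (insert_nonempty _ _) := by
  induction V using Finset.induction_on_min with
  | empty => simp
  | insert a V ha ih =>
  have haV : a ∉ V := fun h => lt_irrefl a (ha a h)
  obtain ⟨ihsum, ihfilter⟩ := ih fun t ht => hV t (mem_insert_of_mem ht)
  have hmin : (insert M (insert a V)).min' (insert_nonempty _ _) = a :=
    le_antisymm (min'_le _ _ (mem_insert_of_mem (mem_insert_self a V)))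
      (le_min' _ _ _ fun t ht => by
        rcases mem_insert.mp ht with rfl | ht
        · exact hV a (mem_insert_self a V)
        rcases mem_insert.mp ht with rfl | ht
        exacts [le_rfl, (ha t ht).le])
  have hnext_a : nextAbove M (insert a V) a = (insert M V).min' (insert_nonempty _ _) := by
    unfold nextAbove
    congr 2
    rw [filter_insert, if_neg (lt_irrefl a), filter_true_of_mem ha]
  have hnext : ∀ t ∈ V, nextAbove M (insert a V) t = nextAbove M V t := fun t ht => by
    unfold nextAbove
    congr 2
    rw [filter_insert, if_neg (ha t ht).not_gt]
  have hsumV : ∀ W ⊆ V,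
      ∑ t ∈ W, (nextAbove M (insert a V) t - t) = ∑ t ∈ W, (nextAbove M V t - t) :=
    fun W hW => sum_congr rfl fun t ht => by rw [hnext t (hW ht)]
  rw [hmin]
  refine ⟨?_, fun y hy => ?_⟩
  · rw [sum_insert haV, hsumV V subset_rfl, ihsum, hnext_a]
    ring
  rcases mem_insert.mp hy with rfl | hy
  · rw [filter_insert, if_neg (lt_irrefl y), filter_false_of_mem fun t ht => (ha t ht).not_gt]
    simp
  · rw [filter_insert, if_pos (ha y hy), sum_insert (by simp [haV]), hsumV _ (filter_subset _ V),
      ihfilter y hy, hnext_a]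
    ring

variable {κ : Type*} [Fintype κ] (x : κ → ℝ)

noncomputable def levels : Finset ℝ := insert 0 (univ.image x)

noncomputable def levelGap (t : ℝ) : ℝ := nextAbove 1 (levels x) t - t

noncomputable def superlevel (t : ℝ) : Finset κ := univ.filter (t < x ·)

variable {x}

theorem superlevel_anti {s t : ℝ} (hst : s ≤ t) : superlevel x t ⊆ superlevel x s :=
  monotone_filter_right _ fun _ _ h => hst.trans_lt h

theorem le_one_of_mem_levels (hx1 : ∀ v, x v ≤ 1) {t : ℝ} (ht : t ∈ levels x) : t ≤ 1 := by
  rcases mem_insert.mp ht with rfl | ht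
  · exact zero_le_one
  obtain ⟨v, -, rfl⟩ := mem_image.mp ht
  exact hx1 v

theorem levelGap_nonneg (hx1 : ∀ v, x v ≤ 1) {t : ℝ} (ht : t ∈ levels x) : 0 ≤ levelGap x t := by
  refine sub_nonneg.mpr (le_min' _ _ _ fun s hs => ?_)
  rcases mem_insert.mp hs with rfl | hs
  exacts [le_one_of_mem_levels hx1 ht, (mem_filter.mp hs).2.le]

theorem min'_insert_one_levels (hx0 : ∀ v, 0 ≤ x v) :
    (insert 1 (levels x)).min' (insert_nonempty _ _) = 0 := by
  refine le_antisymm (min'_le _ _ (mem_insert_of_mem (mem_insert_self 0 _)))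
    (le_min' _ _ _ fun t ht => ?_)
  rcases mem_insert.mp ht with rfl | ht
  · exact zero_le_one
  rcases mem_insert.mp ht with rfl | ht
  · exact le_rfl
  obtain ⟨v, -, rfl⟩ := mem_image.mp ht
  exact hx0 v

variable (hx0 : ∀ v, 0 ≤ x v) (hx1 : ∀ v, x v ≤ 1)
include hx0 hx1

theorem sum_levelGap : ∑ t ∈ levels x, levelGap x t = 1 := by
  simpa [levelGap, min'_insert_one_levels hx0] using
    (sum_nextAbove_sub 1 (levels x) fun _ => le_one_of_mem_levels hx1).1

theorem sum_levelGap_lt (v : κ) : ∑ t ∈ (levels x).filter (· < x v), levelGap x t = x v := by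
  simpa [levelGap, min'_insert_one_levels hx0] using
    (sum_nextAbove_sub 1 (levels x) fun _ => le_one_of_mem_levels hx1).2 (x v)
      (mem_insert_of_mem (mem_image_of_mem x (mem_univ v)))

theorem sum_levelGap_mul_sum_superlevel (f : κ → ℝ) :
    ∑ t ∈ levels x, levelGap x t * ∑ v ∈ superlevel x t, f v = ∑ v, f v * x v := by
  simp_rw [superlevel, sum_filter, mul_sum]
  rw [sum_comm]
  refine sum_congr rfl fun v _ => ?_
  simp_rw [mul_ite, mul_zero]
  rw [← sum_filter, ← sum_mul, sum_levelGap_lt hx0 hx1 v, mul_comm]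

end Levels

theorem exists_le_and_nonneg_of_sum {κ : Type*} (s : Finset κ) (w p g : κ → ℝ) {B : ℝ}
    (hw : ∀ i ∈ s, 0 ≤ w i) (hw1 : ∑ i ∈ s, w i = 1) (hp : ∑ i ∈ s, w i * p i ≤ B)
    (hg : 0 ≤ ∑ i ∈ s, w i * g i) (hgB : ∀ i ∈ s, B < p i → g i ≤ 0) :
    ∃ i ∈ s, p i ≤ B ∧ 0 ≤ g i := by
  by_contra! h
  have hg' : ∀ i ∈ s, w i * g i ≤ 0 := fun i hi => mul_nonpos_of_nonneg_of_nonpos (hw i hi) <| by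
    rcases le_or_gt (p i) B with hpi | hpi
    exacts [(h i hi hpi).le, hgB i hi hpi]
  have hwg := (sum_eq_zero_iff_of_nonpos hg').mp (le_antisymm (sum_nonpos hg') hg)
  have hwL : ∀ i ∈ s, p i ≤ B → w i = 0 := fun i hi hpi =>
    (mul_eq_zero.mp (hwg i hi)).resolve_right (h i hi hpi).ne
  have hwp : ∀ i ∈ s, 0 ≤ w i * (p i - B) := fun i hi => by
    rcases le_or_gt (p i) B with hpi | hpi
    · simp [hwL i hi hpi]
    · exact mul_nonneg (hw i hi) (by linarith)
  have hwp0 := (sum_eq_zero_iff_of_nonneg hwp).mp <| le_antisymm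
    (by simp only [mul_sub, sum_sub_distrib, ← sum_mul, hw1]; linarith) (sum_nonneg hwp)
  have hw0 : ∀ i ∈ s, w i = 0 := fun i hi => by
    rcases le_or_gt (p i) B with hpi | hpi
    · exact hwL i hi hpi
    · exact (mul_eq_zero.mp (hwp0 i hi)).resolve_right (by linarith)
  simp [sum_eq_zero hw0] at hw1

theorem exists_two_point_mix {κ : Type*} (s : Finset κ) (w p q : κ → ℝ) {B : ℝ}
    (hw : ∀ i ∈ s, 0 ≤ w i) (hw1 : ∑ i ∈ s, w i = 1) (hp : ∑ i ∈ s, w i * p i ≤ B) :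
    ∃ i ∈ s, ∃ j ∈ s, ∃ μ : ℝ, 0 ≤ μ ∧ μ ≤ 1 ∧ μ * p i + (1 - μ) * p j ≤ B ∧
      ∑ k ∈ s, w k * q k ≤ μ * q i + (1 - μ) * q j := by
  classical
  set a := ∑ k ∈ s, w k * q k
  -- `σ` is the least slope `≥ 0` of a line through `(B, a)` above all points `(p j, q j)` with
  -- `B < p j`. Some point with `p i ≤ B` lies on or above this line, and mixing it with the point
  -- attaining `σ` (if `σ ≠ 0`) gives the two-point combination.
  set σ := (insert 0 ((s.filter (B < p ·)).image fun j => (q j - a) / (p j - B))).max'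
    (insert_nonempty _ _)
  have hσ0 : 0 ≤ σ := le_max' _ _ (mem_insert_self _ _)
  have hσ : ∀ j ∈ s, B < p j → q j - a - σ * (p j - B) ≤ 0 := fun j hj hpj => by
    have hle : (q j - a) / (p j - B) ≤ σ :=
      le_max' _ _ (mem_insert_of_mem (mem_image_of_mem (fun j => (q j - a) / (p j - B))
        (mem_filter.mpr ⟨hj, hpj⟩)))
    linarith [(div_le_iff₀ (sub_pos.mpr hpj)).mp hle]
  have hsum : ∑ k ∈ s, w k * (q k - a - σ * (p k - B)) = σ * (B - ∑ k ∈ s, w k * p k) := by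
    simp only [mul_sub, sum_sub_distrib, ← sum_mul, hw1, mul_left_comm _ σ, ← mul_sum]
    ring
  obtain ⟨i, hi, hpi, hqi⟩ := exists_le_and_nonneg_of_sum s w p _ hw hw1 hp
    (hsum ▸ mul_nonneg hσ0 (by linarith)) hσ
  have hσmem : σ ∈ insert 0 ((s.filter (B < p ·)).image fun j => (q j - a) / (p j - B)) :=
    max'_mem _ _
  rcases mem_insert.mp hσmem with hσ0' | hσj
  · exact ⟨i, hi, i, hi, 1, zero_le_one, le_rfl, by linarith, by rw [hσ0'] at hqi; linarith⟩
  obtain ⟨j, hj, hσj⟩ := mem_image.mp hσj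
  obtain ⟨hjs, hpj⟩ := mem_filter.mp hj
  have hqj : q j - a = σ * (p j - B) := by
    rw [← hσj, div_mul_cancel₀ _ (sub_pos.mpr hpj).ne']
  have hpij : 0 < p j - p i := by linarith
  set μ := (p j - B) / (p j - p i)
  have hμ : μ * (p j - p i) = p j - B := div_mul_cancel₀ _ hpij.ne'
  have hμ0 : 0 ≤ μ := div_nonneg (by linarith) hpij.le
  refine ⟨i, hi, j, hjs, μ, hμ0, (div_le_one hpij).mpr (by linarith), by nlinarith, ?_⟩
  nlinarith [mul_nonneg hμ0 hqi]

section LP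

variable [Fintype ι] [DecidableEq ι] {parent : ι → ι} {α β : NonRoot r → ℝ}
  (htree : ∀ v : ι, ∃ n, parent^[n] v = r) (hα : ∀ v, 0 ≤ α v) (hβ : ∀ v, 0 ≤ β v) {B c : ℝ}
  (hc : ∀ C : Finset (NonRoot r), IsChain (IsDescendant parent) (C : Set (NonRoot r)) →
    ∑ v ∈ C, α v ≤ c)
include htree hα hβ hc

theorem exists_childClosed_ge_mix {T T' : Finset (NonRoot r)} (hTT' : T ⊆ T')
    (hT : ChildClosedIn parent univ T) (hT' : ChildClosedIn parent univ T') {μ : ℝ}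
    (hμ0 : 0 ≤ μ) (hμ1 : μ ≤ 1) (hB : μ * ∑ v ∈ T, β v + (1 - μ) * ∑ v ∈ T', β v ≤ B) :
    ∃ S, ChildClosedIn parent univ S ∧ ∑ v ∈ S, β v ≤ B ∧
      μ * ∑ v ∈ T, α v + (1 - μ) * ∑ v ∈ T', α v ≤ ∑ v ∈ S, α v + c := by
  have hβD := sum_sdiff hTT' (f := β)
  have hαD := sum_sdiff hTT' (f := α)
  obtain ⟨G, hGD, hG, hGB, hGα⟩ := isRoundable htree hα hβ (T' \ T) (1 - μ) (B - ∑ v ∈ T, β v) c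
    (by linarith) (by linarith) (by nlinarith) fun C _ => hc C
  have hdisj : Disjoint T G := disjoint_sdiff.mono_right hGD
  refine ⟨T ∪ G, ((hT.mono (subset_univ T')).union hG).trans
    (union_subset hTT' (hGD.trans sdiff_subset)) hT', ?_, ?_⟩
  · rw [sum_union hdisj]; linarith
  · rw [sum_union hdisj]; nlinarith

theorem exists_childClosed_ge_lp (x : NonRoot r → ℝ) (hx0 : ∀ v, 0 ≤ x v) (hx1 : ∀ v, x v ≤ 1)
    (hmono : ∀ v u : NonRoot r, parent u.1 = v.1 → x v ≤ x u) (hx : ∑ v, β v * x v ≤ B) :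
    ∃ S, ChildClosedIn parent univ S ∧ ∑ v ∈ S, β v ≤ B ∧ ∑ v, α v * x v ≤ ∑ v ∈ S, α v + c := by
  have hclosed : ∀ t, ChildClosedIn parent univ (superlevel x t) := fun t v hv u _ hpar =>
    mem_filter.mpr ⟨mem_univ u, (mem_filter.mp hv).2.trans_le (hmono v u hpar)⟩
  obtain ⟨t₁, -, t₂, -, μ, hμ0, hμ1, hμB, hμα⟩ := exists_two_point_mix (levels x) (levelGap x)
    (fun t => ∑ v ∈ superlevel x t, β v) (fun t => ∑ v ∈ superlevel x t, α v)
    (B := B) (fun _ => levelGap_nonneg hx1) (sum_levelGap hx0 hx1)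
    (by rwa [sum_levelGap_mul_sum_superlevel hx0 hx1])
  rw [sum_levelGap_mul_sum_superlevel hx0 hx1] at hμα
  rcases le_total t₁ t₂ with h | h
  · obtain ⟨S, hS, hSB, hSα⟩ := exists_childClosed_ge_mix htree hα hβ hc (superlevel_anti h)
      (hclosed t₂) (hclosed t₁) (B := B) (μ := 1 - μ) (by linarith) (by linarith) (by linarith)
    exact ⟨S, hS, hSB, by linarith⟩
  · exact exists_childClosed_ge_mix htree hα hβ hc (superlevel_anti h) (hclosed t₁) (hclosed t₂)
      hμ0 hμ1 hμB |>.imp fun S ⟨hS, hSB, hSα⟩ => ⟨hS, hSB, hμα.trans hSα⟩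

end LP

end TreeKnapsack

open TreeKnapsack

theorem stmt4_general {ι : Type*} [Fintype ι] [DecidableEq ι]
    (r : ι) (parent : ι → ι)
    (htree : ∀ v : ι, ∃ n : ℕ, parent^[n] v = r)
    (α β : {v : ι // v ≠ r} → ℝ) (hα : ∀ v, 0 ≤ α v) (hβ : ∀ v, 0 ≤ β v)
    (B : ℝ) (hB : 0 ≤ B)
    -- the feasible region of the LP relaxation
    (P : Set ({v : ι // v ≠ r} → ℝ))
    (hP : P = {x | (∀ v, 0 ≤ x v ∧ x v ≤ 1) ∧
      (∀ v u : {v : ι // v ≠ r}, parent u.1 = v.1 → x v ≤ x u) ∧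
      ∑ v : {v : ι // v ≠ r}, β v * x v ≤ B})
    -- the LP optimum
    (OPTLP : ℝ)
    (hOPT : OPTLP = sSup {t : ℝ | ∃ x ∈ P, t = ∑ v : {v : ι // v ≠ r}, α v * x v})
    -- the maximum value of a chain (a set of pairwise ancestor-comparable nodes)
    (chainMax : ℝ)
    (hchain : chainMax = sSup {t : ℝ | ∃ C : Finset {v : ι // v ≠ r},
      (∀ u ∈ C, ∀ v ∈ C, u = v ∨ (∃ n : ℕ, parent^[n] u.1 = v.1) ∨
        (∃ n : ℕ, parent^[n] v.1 = u.1)) ∧ t = ∑ v ∈ C, α v}) :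
    ∃ S : Finset {v : ι // v ≠ r},
      (∀ v ∈ S, ∀ u : {v : ι // v ≠ r}, parent u.1 = v.1 → u ∈ S) ∧
      ∑ v ∈ S, β v ≤ B ∧
      OPTLP - chainMax ≤ ∑ v ∈ S, α v := by
  classical
  have hchain_le : ∀ C : Finset (NonRoot r), IsChain (IsDescendant parent) (C : Set (NonRoot r)) →
      ∑ v ∈ C, α v ≤ chainMax := by
    intro C hC
    rw [hchain]
    refine le_csSup ((Set.finite_range fun C : Finset (NonRoot r) => ∑ v ∈ C, α v).bddAbove.mono
      ?_) ⟨C, fun u hu v hv => or_iff_not_imp_left.mpr (hC hu hv), rfl⟩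
    rintro _ ⟨C, -, rfl⟩
    exact ⟨C, rfl⟩
  obtain ⟨S, hS, hSmax⟩ := (univ.filter fun S : Finset (NonRoot r) =>
      ChildClosedIn parent univ S ∧ ∑ v ∈ S, β v ≤ B).exists_max_image (fun S => ∑ v ∈ S, α v)
    ⟨∅, mem_filter.mpr ⟨mem_univ _, fun _ h => absurd h (notMem_empty _), by simpa using hB⟩⟩
  obtain ⟨hSc, hSB⟩ := (mem_filter.mp hS).2
  have hLP : OPTLP ≤ ∑ v ∈ S, α v + chainMax := by
    subst hP hOPT
    refine csSup_le ⟨0, fun _ => 0, ⟨fun _ => ⟨le_rfl, zero_le_one⟩, fun _ _ _ => le_rfl,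
      by simpa using hB⟩, by simp⟩ ?_
    rintro t ⟨x, ⟨hx01, hmono, hx⟩, rfl⟩
    obtain ⟨T, hT, hTB, hTα⟩ := exists_childClosed_ge_lp htree hα hβ hchain_le x
      (fun v => (hx01 v).1) (fun v => (hx01 v).2) hmono hx
    linarith [hSmax T (mem_filter.mpr ⟨mem_univ T, hT, hTB⟩)]
  exact ⟨S, fun v hv u => hSc v hv u (mem_univ u), hSB, by linarith⟩

/-- Theorem 3.2: the tree-knapsack problem admits an integral feasible solution (a
downwards-closed set of non-root nodes within budget) of value at least the LP optimum
minus the maximum value of a chain. The rooted tree is given by a `parent` map on a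
finite node type `ι` with root `r`; LP variables are indexed by non-root nodes. -/
theorem stmt4 {ι : Type*} [Fintype ι] [DecidableEq ι]
    (r : ι) (parent : ι → ι) (hroot : parent r = r)
    (htree : ∀ v : ι, ∃ n : ℕ, parent^[n] v = r)
    (α β : {v : ι // v ≠ r} → ℝ) (hα : ∀ v, 0 ≤ α v) (hβ : ∀ v, 0 ≤ β v)
    (B : ℝ) (hB : 0 ≤ B)
    -- the feasible region of the LP relaxation
    (P : Set ({v : ι // v ≠ r} → ℝ))
    (hP : P = {x | (∀ v, 0 ≤ x v ∧ x v ≤ 1) ∧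
      (∀ v u : {v : ι // v ≠ r}, parent u.1 = v.1 → x v ≤ x u) ∧
      ∑ v : {v : ι // v ≠ r}, β v * x v ≤ B})
    -- the LP optimum
    (OPTLP : ℝ)
    (hOPT : OPTLP = sSup {t : ℝ | ∃ x ∈ P, t = ∑ v : {v : ι // v ≠ r}, α v * x v})
    -- the maximum value of a chain (a set of pairwise ancestor-comparable nodes)
    (chainMax : ℝ)
    (hchain : chainMax = sSup {t : ℝ | ∃ C : Finset {v : ι // v ≠ r},
      (∀ u ∈ C, ∀ v ∈ C, u = v ∨ (∃ n : ℕ, parent^[n] u.1 = v.1) ∨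
        (∃ n : ℕ, parent^[n] v.1 = u.1)) ∧ t = ∑ v ∈ C, α v}) :
    ∃ S : Finset {v : ι // v ≠ r},
      (∀ v ∈ S, ∀ u : {v : ι // v ≠ r}, parent u.1 = v.1 → u ∈ S) ∧
      ∑ v ∈ S, β v ≤ B ∧
      OPTLP - chainMax ≤ ∑ v ∈ S, α v :=
  stmt4_general r parent htree α β hα hβ B hB P hP OPTLP hOPT chainMax hchain
end

section
/- Let a, b ≥ 0 with a + b = 1, and let w_k, h₁, h₂ ≥ 0 be reals with h₁ ≥ w_k and h₂ ≥ w_k. Then max{w_k, h₁ − w_k, (b/2)·h₂ − w_k} ≥ (a·h₁ + b·h₂ − w_k)/5. -/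
/-- Arithmetic core of Claim 4.4 (5-approximation for MST interdiction). -/
theorem stmt7 (a b wk h₁ h₂ : ℝ) (ha : 0 ≤ a) (hb : 0 ≤ b) (hab : a + b = 1)
    (hwk : 0 ≤ wk) (hh₁ : 0 ≤ h₁) (hh₂ : 0 ≤ h₂)
    (h₁wk : wk ≤ h₁) (h₂wk : wk ≤ h₂) :
    (a * h₁ + b * h₂ - wk) / 5 ≤ max wk (max (h₁ - wk) (b / 2 * h₂ - wk)) := by
  set M := max wk (max (h₁ - wk) (b / 2 * h₂ - wk)) with hM
  have m1 : wk ≤ M := le_max_left _ _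
  have m2 : h₁ - wk ≤ M := le_trans (le_max_left _ _) (le_max_right _ _)
  have m3 : b / 2 * h₂ - wk ≤ M := le_trans (le_max_right _ _) (le_max_right _ _)
  have hb1 : b ≤ 1 := by linarith
  have hM0 : 0 ≤ M := le_trans hwk m1
  nlinarith [mul_le_mul_of_nonneg_left m1 (by linarith : (0:ℝ) ≤ 2 - b),
    mul_le_mul_of_nonneg_left m2 ha, mul_nonneg hb hM0]
end

section
/- Let g(λ) = λB + max_{R ∈ ℛ} (val(R) − λ·c(R)), where ℛ is a finite nonempty family of sets, val, c : ℛ → ℝ, and B ∈ ℝ. Suppose λ ≥ 0, R₁, R₂ ∈ ℛ both attain the maximum at λ, and a, b ≥ 0 satisfy a + b = 1 and a·c(R₁) + b·c(R₂) = B. Then a·val(R₁) + b·val(R₂) = min_{λ' ≥ 0} g(λ'). -/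
open Finset

/-- Claim 4.2: if `R₁, R₂` both attain the Lagrangian maximum at `λ ≥ 0` and
`a·c(R₁) + b·c(R₂) = B` with `a, b ≥ 0`, `a + b = 1`, then `a·val(R₁) + b·val(R₂)` is
the minimum over `λ' ≥ 0` of `g(λ') = λ'B + max_R (val(R) − λ'·c(R))`. -/
theorem stmt12 {ι : Type*} [Fintype ι] [Nonempty ι]
    (val c : ι → ℝ) (B : ℝ)
    (g : ℝ → ℝ)
    (hg : g = fun l => l * B +
      Finset.univ.sup' Finset.univ_nonempty (fun R => val R - l * c R))
    (l : ℝ) (hl : 0 ≤ l) (R₁ R₂ : ι)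
    (hR₁ : ∀ S : ι, val S - l * c S ≤ val R₁ - l * c R₁)
    (hR₂ : ∀ S : ι, val S - l * c S ≤ val R₂ - l * c R₂)
    (a b : ℝ) (ha : 0 ≤ a) (hb : 0 ≤ b) (hab : a + b = 1)
    (hB : a * c R₁ + b * c R₂ = B) :
    IsLeast {y : ℝ | ∃ l' : ℝ, 0 ≤ l' ∧ y = g l'} (a * val R₁ + b * val R₂) := by
  constructor
  · refine ⟨l, hl, ?_⟩
    have hsup : Finset.univ.sup' Finset.univ_nonempty (fun R => val R - l * c R)
        = a * (val R₁ - l * c R₁) + b * (val R₂ - l * c R₂) := by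
      have h1 : Finset.univ.sup' Finset.univ_nonempty (fun R => val R - l * c R)
          = val R₁ - l * c R₁ :=
        le_antisymm (Finset.sup'_le _ _ fun S _ => hR₁ S)
          (Finset.le_sup' (fun R => val R - _ * c R) (Finset.mem_univ R₁))
      have h2 : Finset.univ.sup' Finset.univ_nonempty (fun R => val R - l * c R)
          = val R₂ - l * c R₂ :=
        le_antisymm (Finset.sup'_le _ _ fun S _ => hR₂ S)
          (Finset.le_sup' (fun R => val R - _ * c R) (Finset.mem_univ R₂))
      rw [h1] at h2 ⊢
      rw [← h2]
      linear_combination (l * c R₁ - val R₁) * hab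
    rw [hg]
    simp only [hsup]
    nlinarith [hB]
  · rintro y ⟨l', hl', rfl⟩
    rw [hg]
    have h1 : val R₁ - l' * c R₁ ≤
        Finset.univ.sup' Finset.univ_nonempty (fun R => val R - l' * c R) :=
      Finset.le_sup' (fun R => val R - _ * c R) (Finset.mem_univ R₁)
    have h2 : val R₂ - l' * c R₂ ≤
        Finset.univ.sup' Finset.univ_nonempty (fun R => val R - l' * c R) :=
      Finset.le_sup' (fun R => val R - _ * c R) (Finset.mem_univ R₂)
    simp only
    set S := Finset.univ.sup' Finset.univ_nonempty (fun R => val R - l' * c R) with hS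
    have hS1 : (a + b) * S = S := by rw [hab, one_mul]
    nlinarith [mul_le_mul_of_nonneg_left h1 ha, mul_le_mul_of_nonneg_left h2 hb, hS1, hB]
end
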